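/- Let Ω be the open unit disk in ℝ² ≅ ℂ and let γ ∈ L²(Ω). For all integers i, j ≥ 1: ∫_Ω γ(z) ⟨∇Re(z^i), ∇Im(z^j)⟩ dz = i·j·π·sign(j−i) ∫₀¹ r^{i+j−1} b_{|i−j|}(r) dr, where sign is the sign function with sign(0) = 0. -/

import Mathlib

open MeasureTheory Real Filter
open scoped RealInnerProductSpace

/-- Angular Fourier sine coefficient `b_k(r)` of a function `γ` on the unit disk:
`b_0 = 0` and for `k ≥ 1`, `b_k(r) = (1/π) ∫₀^{2π} γ(r e^{iφ}) sin(kφ) dφ`. -/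
noncomputable def fourierSinCoeff (γ : ℂ → ℝ) (k : ℕ) (r : ℝ) : ℝ :=
  if k = 0 then 0
  else
    (1 / π) * ∫ φ in (0:ℝ)..(2 * π),
      γ ((r : ℂ) * Complex.exp (Complex.I * (φ : ℂ))) * Real.sin (k * φ)

/-!
For a holomorphic `f`, the gradients of `Re f` and `Im f` are `conj f'` and `I * conj f'`, so
`⟨∇Re(z^i), ∇Im(z^j)⟩ = i j Im(conj z^(i-1) z^(j-1))`, which at `z = r e^{iφ}` equals
`i j r^(i+j-2) sin((j-i)φ)`. In polar coordinates the Jacobian supplies one more factor `r`,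
and Fubini reduces the disk integral to integrals over the circles of radius `r`. Writing
`sin((j-i)φ) = sign(j-i) sin(|i-j|φ)` and moving the angular integral from `(-π, π)` to
`(0, 2π)` by periodicity, each circle contributes `π sign(j-i) b_{|i-j|}(r)`.
-/

open Set
open scoped ComplexConjugate

theorem HasDerivAt.hasGradientAt_re {f : ℂ → ℂ} {f' z : ℂ} (h : HasDerivAt f f' z) :
    HasGradientAt (fun w => (f w).re) (conj f') z := by
  have hdual : InnerProductSpace.toDual ℝ ℂ (conj f')
      = Complex.reCLM.comp ((ContinuousLinearMap.toSpanSingleton ℂ f').restrictScalars ℝ) := by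
    ext v
    rw [InnerProductSpace.toDual_apply_apply, Complex.inner, Complex.conj_conj]
    simp [mul_comm]
  rw [hasGradientAt_iff_hasFDerivAt, hdual]
  exact Complex.reCLM.hasFDerivAt.comp z (h.hasFDerivAt.restrictScalars ℝ)

theorem HasDerivAt.hasGradientAt_im {f : ℂ → ℂ} {f' z : ℂ} (h : HasDerivAt f f' z) :
    HasGradientAt (fun w => (f w).im) (Complex.I * conj f') z := by
  convert (h.const_mul (-Complex.I)).hasGradientAt_re using 1
  · ext w
    rw [neg_mul, Complex.neg_re, Complex.I_mul_re, neg_neg]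
  · rw [map_mul, Complex.conj_neg_I]

theorem Complex.inner_conj_I_mul_conj (a b : ℂ) : ⟪conj a, I * conj b⟫ = (conj a * b).im := by
  rw [Complex.inner, Complex.conj_conj, mul_assoc, Complex.I_mul_re, ← Complex.conj_im, map_mul,
    Complex.conj_conj, mul_comm]

theorem inner_gradient_re_pow_gradient_im_pow (i j : ℕ) (z : ℂ) :
    ⟪gradient (fun w : ℂ => (w ^ i).re) z, gradient (fun w : ℂ => (w ^ j).im) z⟫
      = i * j * (conj z ^ (i - 1) * z ^ (j - 1)).im := by
  rw [(hasDerivAt_pow i z).hasGradientAt_re.gradient,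
    (hasDerivAt_pow j z).hasGradientAt_im.gradient, Complex.inner_conj_I_mul_conj, map_mul,
    map_natCast, map_pow, mul_mul_mul_comm, ← Nat.cast_mul, ← Complex.ofReal_natCast,
    Complex.im_ofReal_mul, Nat.cast_mul]

namespace Complex

theorem continuous_polarCoord_symm : Continuous Complex.polarCoord.symm :=
  equivRealProdCLM.symm.continuous.comp _root_.continuous_polarCoord_symm

theorem polarCoord_symm_apply_eq_ofReal_mul_exp (r φ : ℝ) :
    Complex.polarCoord.symm (r, φ) = r * exp (I * φ) := by
  rw [Complex.polarCoord_symm_apply, mul_comm I, exp_mul_I, ← ofReal_cos, ← ofReal_sin]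

theorem polarCoord_target_inter_preimage_ball (R : ℝ) :
    polarCoord.target ∩ Complex.polarCoord.symm ⁻¹' Metric.ball 0 R
      = Ioo 0 R ×ˢ Ioo (-π) π := by
  ext ⟨r, φ⟩
  simp only [mem_inter_iff, mem_preimage, mem_ball_zero_iff, norm_polarCoord_symm,
    polarCoord_target, mem_prod, mem_Ioi, mem_Ioo]
  constructor
  · rintro ⟨⟨hr, hφ⟩, hR⟩
    exact ⟨⟨hr, (le_abs_self r).trans_lt hR⟩, hφ⟩
  · rintro ⟨⟨hr, hR⟩, hφ⟩
    exact ⟨⟨hr, hφ⟩, by rwa [abs_of_pos hr]⟩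

section Integral

variable {E : Type*} [NormedAddCommGroup E] [NormedSpace ℝ E]

theorem setIntegral_ball_eq_setIntegral_polarCoord_symm (f : ℂ → E) (R : ℝ) :
    ∫ z in Metric.ball 0 R, f z
      = ∫ p in Ioo 0 R ×ˢ Ioo (-π) π, p.1 • f (Complex.polarCoord.symm p) := by
  have hind : ∀ p : ℝ × ℝ,
      p.1 • (Metric.ball 0 R).indicator f (Complex.polarCoord.symm p) =
        (Complex.polarCoord.symm ⁻¹' Metric.ball 0 R).indicator
          (fun p => p.1 • f (Complex.polarCoord.symm p)) p := fun p => by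
    by_cases hp : Complex.polarCoord.symm p ∈ Metric.ball 0 R
    · rw [indicator_of_mem hp, indicator_of_mem (mem_preimage.mpr hp)]
    · rw [indicator_of_notMem hp, indicator_of_notMem (fun h => hp (mem_preimage.mp h)),
        smul_zero]
  rw [← integral_indicator Metric.isOpen_ball.measurableSet,
    ← Complex.integral_comp_polarCoord_symm, ← polarCoord_target_inter_preimage_ball]
  simp only [hind]
  exact setIntegral_indicator
    (Metric.isOpen_ball.measurableSet.preimage continuous_polarCoord_symm.measurable)

theorem integrableOn_polarCoord_symm_iff {s : Set (ℝ × ℝ)} (hs : MeasurableSet s)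
    (hst : s ⊆ polarCoord.target) (f : ℂ → E) :
    IntegrableOn (fun p => p.1 • f (Complex.polarCoord.symm p)) s ↔
      IntegrableOn f (Complex.polarCoord.symm '' s) := by
  have himage : Complex.polarCoord.symm '' s
      = measurableEquivRealProd.symm '' (polarCoord.symm '' s) := by
    rw [image_image]
    rfl
  rw [himage, volume_preserving_equiv_real_prod.symm.integrableOn_image
      measurableEquivRealProd.symm.measurableEmbedding,
    integrableOn_image_iff_integrableOn_abs_det_fderiv_smul volume hs
      (fun p _ => (hasFDerivAt_polarCoord_symm p).hasFDerivWithinAt)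
      (polarCoord.symm.injOn.mono hst)]
  refine integrableOn_congr_fun (fun p hp => ?_) hs
  rw [det_fderivPolarCoordSymm, abs_of_pos (show 0 < p.1 from (hst hp).1)]
  rfl

theorem setIntegral_ball_eq_integral_polar {f : ℂ → E} {R : ℝ}
    (hf : IntegrableOn f (Metric.ball 0 R)) :
    ∫ z in Metric.ball 0 R, f z
      = ∫ r in Ioo 0 R, ∫ φ in Ioo (-π) π, r • f (Complex.polarCoord.symm (r, φ)) := by
  have hS : MeasurableSet (Ioo 0 R ×ˢ Ioo (-π) π) := measurableSet_Ioo.prod measurableSet_Ioo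
  have hsub := (polarCoord_target_inter_preimage_ball R).symm.subset
  rw [setIntegral_ball_eq_setIntegral_polarCoord_symm, Measure.volume_eq_prod, setIntegral_prod]
  rw [← Measure.volume_eq_prod,
    integrableOn_polarCoord_symm_iff hS (hsub.trans inter_subset_left)]
  exact hf.mono_set (image_subset_iff.mpr (hsub.trans inter_subset_right))

end Integral

theorem im_conj_pow_mul_pow_polarCoord_symm (a b : ℕ) (r φ : ℝ) :
    (conj (Complex.polarCoord.symm (r, φ)) ^ a * Complex.polarCoord.symm (r, φ) ^ b).im
      = r ^ (a + b) * Real.sin ((b - a) * φ) := by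
  have hconj : conj (Complex.polarCoord.symm (r, φ)) = r * exp (-I * φ) := by
    rw [polarCoord_symm_apply_eq_ofReal_mul_exp, map_mul, conj_ofReal, ← exp_conj]
    simp
  have hprod : conj (Complex.polarCoord.symm (r, φ)) ^ a * Complex.polarCoord.symm (r, φ) ^ b
      = (r ^ (a + b) : ℝ) * exp (((b - a) * φ : ℝ) * I) := by
    rw [hconj, polarCoord_symm_apply_eq_ofReal_mul_exp, mul_pow, mul_pow, ← exp_nat_mul,
      ← exp_nat_mul, mul_mul_mul_comm, ← pow_add, ← exp_add]
    push_cast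
    ring_nf
  rw [hprod, im_ofReal_mul, exp_ofReal_mul_I_im]

end Complex

theorem Real.sin_int_mul_eq_sign_mul_sin_natAbs_mul (m : ℤ) (x : ℝ) :
    sin (m * x) = m.sign * sin (m.natAbs * x) := by
  conv_lhs => rw [← Int.sign_mul_natAbs m]
  obtain h | h | h := m.sign_trichotomy <;> simp [h, neg_mul, Real.sin_neg]

theorem setIntegral_Ioo_mul_sin_nat_mul (γ : ℂ → ℝ) (r : ℝ) {k : ℕ} (hk : k ≠ 0) :
    ∫ φ in Ioo (-π) π, γ (Complex.polarCoord.symm (r, φ)) * sin (k * φ)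
      = π * fourierSinCoeff γ k r := by
  have hper : Function.Periodic
      (fun φ => γ (Complex.polarCoord.symm (r, φ)) * sin (k * φ)) (2 * π) := fun φ => by
    simp [mul_add, Real.sin_add_nat_mul_two_pi]
  have hshift := hper.intervalIntegral_add_eq (-π) 0
  rw [show -π + 2 * π = π by ring, zero_add] at hshift
  rw [← integral_Ioc_eq_integral_Ioo,
    ← intervalIntegral.integral_of_le (neg_le_self pi_nonneg), hshift, fourierSinCoeff, if_neg hk,
    ← mul_assoc, mul_one_div_cancel pi_ne_zero, one_mul]
  simp_rw [Complex.polarCoord_symm_apply_eq_ofReal_mul_exp]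

theorem setIntegral_Ioo_mul_sin_int_mul (γ : ℂ → ℝ) (r : ℝ) (m : ℤ) :
    ∫ φ in Ioo (-π) π, γ (Complex.polarCoord.symm (r, φ)) * sin (m * φ)
      = π * m.sign * fourierSinCoeff γ m.natAbs r := by
  simp_rw [sin_int_mul_eq_sign_mul_sin_natAbs_mul, mul_left_comm _ (m.sign : ℝ)]
  rw [integral_const_mul]
  rcases eq_or_ne m 0 with rfl | hm
  · simp
  · rw [setIntegral_Ioo_mul_sin_nat_mul γ r (Int.natAbs_ne_zero.mpr hm)]
    ring

theorem setIntegral_Ioo_smul_mul_im_conj_pow_mul_pow (γ : ℂ → ℝ) {i j : ℕ} (hi : 1 ≤ i)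
    (hj : 1 ≤ j) (r : ℝ) :
    ∫ φ in Ioo (-π) π, r • (γ (Complex.polarCoord.symm (r, φ)) *
        (i * j * (conj (Complex.polarCoord.symm (r, φ)) ^ (i - 1) *
          Complex.polarCoord.symm (r, φ) ^ (j - 1)).im))
      = (i * j * π * (((j : ℤ) - i).sign : ℝ)) *
          (r ^ (i + j - 1) * fourierSinCoeff γ ((i : ℤ) - j).natAbs r) := by
  have hfreq : ((j - 1 : ℕ) : ℝ) - (i - 1 : ℕ) = (((j : ℤ) - i : ℤ) : ℝ) := by
    push_cast [Nat.cast_sub hi, Nat.cast_sub hj]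
    ring
  have hpow : r * r ^ (i - 1 + (j - 1)) = r ^ (i + j - 1) := by
    rw [← pow_succ']
    congr 1
    omega
  simp_rw [Complex.im_conj_pow_mul_pow_polarCoord_symm, hfreq, smul_eq_mul]
  calc _ = (i * j * r ^ (i + j - 1)) * ∫ φ in Ioo (-π) π,
        γ (Complex.polarCoord.symm (r, φ)) * sin (((j : ℤ) - i : ℤ) * φ) := by
        rw [← integral_const_mul, ← hpow]
        congr 1 with φ
        ring
    _ = _ := by
        rw [setIntegral_Ioo_mul_sin_int_mul, ← Int.natAbs_neg, neg_sub]
        ring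

/-- for `γ ∈ L²` of the unit disk and `i, j ≥ 1`,
`∫_Ω γ ⟨∇Re(z^i), ∇Im(z^j)⟩ = i j π sign(j-i) ∫₀¹ r^{i+j-1} b_{|i-j|}(r) dr`. -/
theorem linearized_DtN_cos_sin (γ : ℂ → ℝ)
    (hγ : MemLp γ 2 (volume.restrict (Metric.ball (0:ℂ) 1)))
    (i j : ℕ) (hi : 1 ≤ i) (hj : 1 ≤ j) :
    (∫ z in Metric.ball (0:ℂ) 1,
        γ z * ⟪gradient (fun w : ℂ => (w ^ i).re) z,
               gradient (fun w : ℂ => (w ^ j).im) z⟫)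
      = (i : ℝ) * j * π * (((j : ℤ) - i).sign : ℝ) *
          ∫ r in (0:ℝ)..1, r ^ (i + j - 1) * fourierSinCoeff γ ((i : ℤ) - j).natAbs r := by
  simp_rw [inner_gradient_re_pow_gradient_im_pow]
  have : IsFiniteMeasure (volume.restrict (Metric.ball (0:ℂ) 1)) :=
    isFiniteMeasure_restrict.mpr measure_ball_lt_top.ne
  have hint : IntegrableOn (fun z => γ z * (i * j * (conj z ^ (i - 1) * z ^ (j - 1)).im))
      (Metric.ball 0 1) :=
    IntegrableOn.mul_continuousOn_of_subset (hγ.integrable one_le_two) (by fun_prop)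
      measurableSet_ball (isCompact_closedBall 0 1) Metric.ball_subset_closedBall
  rw [Complex.setIntegral_ball_eq_integral_polar hint,
    setIntegral_congr_fun measurableSet_Ioo
      fun r _ => setIntegral_Ioo_smul_mul_im_conj_pow_mul_pow γ hi hj r, integral_const_mul,
    intervalIntegral.integral_of_le zero_le_one, integral_Ioc_eq_integral_Ioo]
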